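/- Let g : ℝ → ℝ be real-analytic at z₀ in the sense that λ ↦ g(z₀ + λ) has a convergent power series on a ball of radius r > 0. Then the formal Di Paola–Falsone series Σ_{j=1}^∞ g⁽ʲ⁾(z₀) λʲ/j! has positive radius of convergence, where g⁽¹⁾ = g, g⁽ʲ⁺¹⁾ = g · (g⁽ʲ⁾)'. -/

import Mathlib

noncomputable def gIter (g : ℝ → ℝ) : ℕ → ℝ → ℝ
  | 0 => fun _ => 0
  | 1 => g
  | (j+2) => fun x => g x * deriv (gIter g (j+1)) x

/-!
Cauchy majorants. If the Taylor coefficients of `y ↦ g (z₀ + y)` are bounded by those of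
`C (1 - a y)⁻¹`, then those of `y ↦ gIter g (j + 1) (z₀ + y)` are bounded by those of
`K_j (1 - a y)^{-(2j+1)}`: differentiating `K (1 - a y)^{-(k+1)}` gives
`(k+1) a K (1 - a y)^{-(k+2)}`, and multiplying by the majorant of `g` raises the exponent once
more, so `K_{j+1} = (2j+1) C a K_j ≤ C (2Ca)^{j+1} (j+1)!`. At `y = 0` this gives
`|gIter g (j + 1) z₀| ≤ C (2Ca)^j j!`, so the series is dominated by a geometric one
for `|l| < 1 / (2Ca)`.
-/

open Finset Nat

def HasPowerSeriesOn (f : ℝ → ℝ) (c : ℕ → ℝ) (t : ℝ) : Prop :=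
  ∀ y, |y| < t → HasSum (fun n => c n * y ^ n) (f y)

/-- `c` is dominated termwise by the Taylor coefficients of `K * (1 - a * x)⁻¹ ^ (k + 1)`. -/
def IsMajorizedBy (c : ℕ → ℝ) (K a : ℝ) (k : ℕ) : Prop :=
  ∀ n, |c n| ≤ K * a ^ n * (n + k).choose k

def derivCoeff (c : ℕ → ℝ) (n : ℕ) : ℝ := (n + 1) * c (n + 1)

def cauchyCoeff (c d : ℕ → ℝ) (n : ℕ) : ℝ := ∑ i ∈ range (n + 1), c i * d (n - i)

namespace IsMajorizedBy

variable {c d : ℕ → ℝ} {C K K' a : ℝ} {k : ℕ}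

lemma abs_coeff_zero_le (h : IsMajorizedBy c K a k) : |c 0| ≤ K := by
  simpa using h 0

lemma nonneg (h : IsMajorizedBy c K a k) : 0 ≤ K :=
  (abs_nonneg _).trans h.abs_coeff_zero_le

lemma mono (h : IsMajorizedBy c K a k) (hK : K ≤ K') (ha : 0 ≤ a) : IsMajorizedBy c K' a k :=
  fun n => (h n).trans (by gcongr)

lemma summable_norm_mul_pow (h : IsMajorizedBy c K a k) (ha : 0 ≤ a) {y : ℝ}
    (hy : a * |y| < 1) : Summable fun n => ‖c n * y ^ n‖ := by
  have hay : ‖a * |y|‖ < 1 := by rwa [Real.norm_of_nonneg (by positivity)]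
  refine .of_nonneg_of_le (fun _ => norm_nonneg _) (fun n => ?_)
    ((summable_choose_mul_geometric_of_norm_lt_one k hay).mul_left K)
  rw [norm_mul, norm_pow, Real.norm_eq_abs, Real.norm_eq_abs, mul_pow]
  calc |c n| * |y| ^ n ≤ K * a ^ n * (n + k).choose k * |y| ^ n := by gcongr; exact h n
    _ = _ := by ring

lemma derivCoeff (h : IsMajorizedBy c K a k) :
    IsMajorizedBy (derivCoeff c) ((k + 1) * a * K) a (k + 1) := by
  intro n
  have hchoose : (n + 1 + k).choose k * (n + 1) = (n + (k + 1)).choose (k + 1) * (k + 1) := by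
    rw [show n + (k + 1) = n + 1 + k by ring, Nat.choose_succ_right_eq, Nat.add_sub_cancel]
  have hchoose' : ((n + 1 + k).choose k * (n + 1) : ℝ) =
      (n + (k + 1)).choose (k + 1) * (k + 1) := by exact_mod_cast hchoose
  calc |_root_.derivCoeff c n| = (n + 1) * |c (n + 1)| := by
        rw [_root_.derivCoeff, abs_mul, abs_of_nonneg (by positivity)]
    _ ≤ (n + 1) * (K * a ^ (n + 1) * (n + 1 + k).choose k) := by
        gcongr; exact_mod_cast h (n + 1)
    _ = K * a ^ (n + 1) * ((n + 1 + k).choose k * (n + 1)) := by ring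
    _ = _ := by rw [hchoose']; ring

lemma cauchyCoeff (hc : IsMajorizedBy c C a 0) (hd : IsMajorizedBy d K a k) (ha : 0 ≤ a) :
    IsMajorizedBy (cauchyCoeff c d) (C * K) a (k + 1) := by
  intro n
  calc |_root_.cauchyCoeff c d n| ≤ ∑ i ∈ range (n + 1), |c i| * |d (n - i)| := by
        simpa only [_root_.cauchyCoeff, abs_mul] using
          abs_sum_le_sum_abs (fun i => c i * d (n - i)) (range (n + 1))
    _ ≤ ∑ i ∈ range (n + 1), C * a ^ i * (K * a ^ (n - i) * (n - i + k).choose k) := by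
        refine sum_le_sum fun i _ => mul_le_mul (by simpa using hc i) (hd _) (abs_nonneg _) ?_
        have := hc.nonneg
        positivity
    _ = C * K * a ^ n * ∑ i ∈ range (n + 1), ((n - i + k).choose k : ℝ) := by
        rw [mul_sum]
        refine sum_congr rfl fun i hi => ?_
        rw [← pow_mul_pow_sub a (Nat.le_of_lt_succ (mem_range.mp hi))]
        ring
    _ = C * K * a ^ n * (n + (k + 1)).choose (k + 1) := by
        have hreflect := sum_range_reflect (fun m => ((m + k).choose k : ℝ)) (n + 1)
        simp only [Nat.add_sub_cancel] at hreflect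
        rw [hreflect, ← Nat.cast_sum, Nat.sum_range_add_choose, add_assoc]

end IsMajorizedBy

namespace HasPowerSeriesOn

variable {f h : ℝ → ℝ} {c d : ℕ → ℝ} {K a t : ℝ} {k : ℕ}

lemma mono (hf : HasPowerSeriesOn f c t) {s : ℝ} (hst : s ≤ t) : HasPowerSeriesOn f c s :=
  fun y hy => hf y (hy.trans_le hst)

lemma apply_zero (hf : HasPowerSeriesOn f c t) (ht : 0 < t) : f 0 = c 0 :=
  (hf 0 (by simpa using ht)).unique <| by
    simpa using hasSum_single (f := fun n => c n * 0 ^ n) 0 fun n hn => by simp [hn]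

lemma mul (hf : HasPowerSeriesOn f c t) (hh : HasPowerSeriesOn h d t)
    (hc : ∀ y, |y| < t → Summable fun n => ‖c n * y ^ n‖)
    (hd : ∀ y, |y| < t → Summable fun n => ‖d n * y ^ n‖) :
    HasPowerSeriesOn (fun y => f y * h y) (cauchyCoeff c d) t := by
  intro y hy
  have hterm : ∀ n, cauchyCoeff c d n * y ^ n =
      ∑ i ∈ range (n + 1), c i * y ^ i * (d (n - i) * y ^ (n - i)) := fun n => by
    rw [_root_.cauchyCoeff, sum_mul]
    refine sum_congr rfl fun i hi => ?_
    rw [← pow_mul_pow_sub y (Nat.le_of_lt_succ (mem_range.mp hi))]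
    ring
  have hprod := hasSum_sum_range_mul_of_summable_norm (hc y hy) (hd y hy)
  rw [(hf y hy).tsum_eq, (hh y hy).tsum_eq, ← funext hterm] at hprod
  exact hprod

lemma deriv (hf : HasPowerSeriesOn f c t) (hc : IsMajorizedBy c K a k) (ha : 0 ≤ a)
    (hat : a * t < 1) : HasPowerSeriesOn (deriv f) (derivCoeff c) t := by
  intro y hy
  have ht : 0 < t := (abs_nonneg y).trans_lt hy
  have hc' := hc.derivCoeff
  have hball : ∀ z ∈ Metric.ball (0 : ℝ) t, |z| < t := fun z hz => by
    simpa [Real.dist_eq] using hz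
  have htail : ∀ z, |z| < t → HasSum (fun n => c (n + 1) * z ^ (n + 1)) (f z - c 0) :=
    fun z hz => by simpa using (hasSum_nat_add_iff' 1).mpr (hf z hz)
  have hderiv : HasDerivAt (fun z => ∑' n, c (n + 1) * z ^ (n + 1))
      (∑' n, derivCoeff c n * y ^ n) y := by
    refine hasDerivAt_tsum_of_isPreconnected (u := fun n => ‖derivCoeff c n * t ^ n‖)
      (g := fun n z => c (n + 1) * z ^ (n + 1)) (g' := fun n z => derivCoeff c n * z ^ n)
      (hc'.summable_norm_mul_pow ha (by rwa [abs_of_pos ht])) Metric.isOpen_ball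
      (convex_ball _ _).isPreconnected (fun n z _ => ?_) (fun n z hz => ?_)
      (Metric.mem_ball_self ht) (htail 0 (by simpa using ht)).summable (by simpa using hy)
    · simpa [derivCoeff, mul_assoc, mul_comm, mul_left_comm] using
        (hasDerivAt_pow (n + 1) z).const_mul (c (n + 1))
    · rw [norm_mul, norm_mul, norm_pow, norm_pow, Real.norm_eq_abs t, abs_of_pos ht]
      gcongr
      exact (hball z hz).le
  have hf' : HasDerivAt f (∑' n, derivCoeff c n * y ^ n) y := by
    refine (hderiv.const_add (c 0)).congr_of_eventuallyEq ?_
    have hy' : y ∈ Metric.ball (0 : ℝ) t := by simpa using hy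
    filter_upwards [Metric.isOpen_ball.mem_nhds hy'] with z hz
    rw [(htail z (hball z hz)).tsum_eq]
    ring
  rw [hf'.deriv]
  exact (hc'.summable_norm_mul_pow ha
    ((mul_le_mul_of_nonneg_left hy.le ha).trans_lt hat)).of_norm.hasSum

end HasPowerSeriesOn

open scoped ENNReal in
lemma HasFPowerSeriesOnBall.exists_hasPowerSeriesOn_isMajorizedBy {f : ℝ → ℝ}
    {p : FormalMultilinearSeries ℝ ℝ ℝ} {r : ℝ≥0∞} (hf : HasFPowerSeriesOnBall f p 0 r) :
    ∃ C ε : ℝ, 0 < ε ∧ HasPowerSeriesOn f p.coeff ε ∧ IsMajorizedBy p.coeff C ε⁻¹ 0 := by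
  obtain ⟨ε, hε0, hεr⟩ := ENNReal.lt_iff_exists_nnreal_btwn.mp hf.r_pos
  obtain ⟨C, -, hC⟩ := p.norm_mul_pow_le_of_lt_radius (hεr.trans_le hf.r_le)
  have hε : (0 : ℝ) < ε := by exact_mod_cast hε0
  refine ⟨C, ε, hε, fun y hy => ?_, fun n => ?_⟩
  · have hyr : y ∈ Metric.eball (0 : ℝ) r := by
      refine Metric.mem_eball.mpr (lt_trans ?_ hεr)
      rw [edist_zero_right, ← ofReal_norm, Real.norm_eq_abs]
      exact (ENNReal.ofReal_lt_ofReal_iff hε).mpr hy |>.trans_eq ENNReal.ofReal_coe_nnreal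
    simpa [FormalMultilinearSeries.apply_eq_pow_smul_coeff, mul_comm] using hf.hasSum hyr
  · rw [← Real.norm_eq_abs, ← FormalMultilinearSeries.norm_apply_eq_norm_coef, inv_pow,
      ← div_eq_mul_inv]
    simpa [le_div_iff₀ (pow_pos hε n)] using hC n

theorem hasPowerSeriesOn_gIter {g : ℝ → ℝ} {z₀ C a t : ℝ} {c : ℕ → ℝ}
    (hg : HasPowerSeriesOn (fun y => g (z₀ + y)) c t) (hc : IsMajorizedBy c C a 0) (ha : 0 ≤ a)
    (hat : a * t < 1) (j : ℕ) :
    ∃ d, HasPowerSeriesOn (fun y => gIter g (j + 1) (z₀ + y)) d t ∧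
      IsMajorizedBy d (C * (2 * C * a) ^ j * j !) a (2 * j) := by
  have hsummable {d : ℕ → ℝ} {K : ℝ} {k : ℕ} (hd : IsMajorizedBy d K a k) (y : ℝ)
      (hy : |y| < t) : Summable fun n => ‖d n * y ^ n‖ :=
    hd.summable_norm_mul_pow ha ((mul_le_mul_of_nonneg_left hy.le ha).trans_lt hat)
  induction j with
  | zero => exact ⟨c, by simpa [gIter] using hg, by simpa using hc⟩
  | succ j ih =>
    obtain ⟨d, hd, hdK⟩ := ih
    have hrec : (fun y => gIter g (j + 1 + 1) (z₀ + y)) =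
        fun y => g (z₀ + y) * deriv (fun y => gIter g (j + 1) (z₀ + y)) y := by
      funext y
      rw [deriv_comp_const_add]
      rfl
    refine ⟨cauchyCoeff c (derivCoeff d), ?_, ?_⟩
    · rw [hrec]
      exact hg.mul (hd.deriv hdK ha hat) (hsummable hc) (hsummable hdK.derivCoeff)
    · rw [show 2 * (j + 1) = 2 * j + 1 + 1 by ring]
      refine (hc.cauchyCoeff hdK.derivCoeff ha).mono ?_ ha
      have hC := hc.nonneg
      have hpos : 0 ≤ C * (2 * C * a) ^ j * j ! * (C * a) := by positivity
      rw [pow_succ, Nat.factorial_succ]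
      push_cast
      nlinarith

lemma summable_mul_pow_div_factorial {b : ℕ → ℝ} {C A l : ℝ}
    (hb : ∀ j, |b j| ≤ C * A ^ j * j !) (hA : 0 ≤ A) (hl : A * |l| < 1) :
    Summable fun j => b j * l ^ (j + 1) / (j + 1)! := by
  have hC : 0 ≤ C := by simpa using (abs_nonneg _).trans (hb 0)
  refine .of_norm_bounded
    ((summable_geometric_of_lt_one (by positivity) hl).mul_left (C * |l|)) fun j => ?_
  have hfact : (j ! : ℝ) ≤ (j + 1)! := by exact_mod_cast Nat.factorial_le (Nat.le_succ j)
  rw [Real.norm_eq_abs, abs_div, abs_mul, abs_pow, Nat.abs_cast,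
    div_le_iff₀ (by positivity)]
  calc |b j| * |l| ^ (j + 1) ≤ C * A ^ j * j ! * |l| ^ (j + 1) := by gcongr; exact hb j
    _ ≤ C * A ^ j * (j + 1)! * |l| ^ (j + 1) := by gcongr
    _ = C * |l| * (A * |l|) ^ j * (j + 1)! := by ring

theorem stmt19_general (g : ℝ → ℝ) (z₀ : ℝ) (r : ENNReal)
    (p : FormalMultilinearSeries ℝ ℝ ℝ)
    (hg : HasFPowerSeriesOnBall (fun l => g (z₀ + l)) p 0 r) :
    ∃ R : ℝ, 0 < R ∧ ∀ l : ℝ, |l| < R →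
      Summable (fun j : ℕ => gIter g (j + 1) z₀ * l ^ (j + 1) / (Nat.factorial (j + 1))) := by
  obtain ⟨C, ε, hε, hgε, hC⟩ := hg.exists_hasPowerSeriesOn_isMajorizedBy
  set A := 2 * C * ε⁻¹
  have hA : 0 ≤ A := by have := hC.nonneg; positivity
  have hbound (j : ℕ) : |gIter g (j + 1) z₀| ≤ C * A ^ j * j ! := by
    obtain ⟨d, hd, hdK⟩ := hasPowerSeriesOn_gIter (hgε.mono (half_le_self hε.le)) hC
      (by positivity) (by field_simp; norm_num) j
    have hd0 : gIter g (j + 1) z₀ = d 0 := by simpa using hd.apply_zero (by positivity)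
    exact hd0 ▸ hdK.abs_coeff_zero_le
  refine ⟨(A + 1)⁻¹, by positivity, fun l hl => summable_mul_pow_div_factorial hbound hA ?_⟩
  calc A * |l| ≤ (A + 1) * |l| := by gcongr; linarith
    _ < (A + 1) * (A + 1)⁻¹ := by gcongr
    _ = 1 := mul_inv_cancel₀ (by positivity)

theorem stmt19 (g : ℝ → ℝ) (z₀ : ℝ) (r : ENNReal) (hr : 0 < r)
    (p : FormalMultilinearSeries ℝ ℝ ℝ)
    (hg : HasFPowerSeriesOnBall (fun l => g (z₀ + l)) p 0 r) :
    ∃ R : ℝ, 0 < R ∧ ∀ l : ℝ, |l| < R →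
      Summable (fun j : ℕ => gIter g (j + 1) z₀ * l ^ (j + 1) / (Nat.factorial (j + 1))) :=
  stmt19_general g z₀ r p hg
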